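/- Let 𝔫 be a finite-dimensional real 2-step nilpotent Lie algebra with complement V∞ of ⁅𝔫, 𝔫⁆, projection π, and norm ‖·‖∞ on V∞. Let d∞ be a metric on 𝔫 whose closed balls are compact in the norm topology of 𝔫 and which satisfies d∞(0, v) = ‖v‖∞ for every v ∈ V∞ and ‖π(h)‖∞ ≤ d∞(0, h) for every h ∈ 𝔫. Then for every g ∈ 𝔫 and every r > 0, the set C(g, r) := {⁅g, y⁆ : y ∈ 𝔫, d∞(0, y) ≤ r} is a compact subset of ⁅𝔫, 𝔫⁆ that is star-convex about 0 (i.e. s·z ∈ C(g, r) whenever z ∈ C(g, r) and s ∈ [0, 1]); if moreover 𝔫 is non-singular and g ∉ ⁅𝔫, 𝔫⁆, then C(g, r) is a neighborhood of 0 in ⁅𝔫, 𝔫⁆. -/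

import Mathlib

/-!
Since `⁅𝔫, 𝔫⁆` is central, `⁅g, y⁆ = ⁅g, π y⁆`, and `‖π y‖∞ ≤ d∞(0, y)` while `d∞(0, v) = ‖v‖∞`
on `V∞`. Hence `C(g, r)` is the image of the `‖·‖∞`-ball of radius `r` in `V∞` under the linear
map `ad g`, which makes it star-convex; it is also the image of the compact `d∞`-ball under
`ad g`. If `𝔫` is non-singular and `g ∉ ⁅𝔫, 𝔫⁆`, then `ad g` maps `V∞` onto `⁅𝔫, 𝔫⁆`; a
surjective linear map between finite-dimensional spaces is open and every seminorm on a
finite-dimensional space is continuous, so the image of the ball is a neighbourhood of `0`.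
-/

noncomputable section

/-- The derived subalgebra ⁅𝔫, 𝔫⁆, as a linear subspace: the span of all brackets. -/
def derivedSubalg (𝔫 : Type*) [LieRing 𝔫] [LieAlgebra ℝ 𝔫] : Submodule ℝ 𝔫 :=
  Submodule.span ℝ {z : 𝔫 | ∃ x y : 𝔫, ⁅x, y⁆ = z}

/-- A 2-step nilpotent Lie algebra is non-singular if every element of `⁅𝔫, 𝔫⁆` is a
bracket `⁅x, y⁆` for every fixed `x ∉ ⁅𝔫, 𝔫⁆`. -/
def Nonsingular (𝔫 : Type*) [LieRing 𝔫] [LieAlgebra ℝ 𝔫] : Prop :=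
  ∀ z ∈ derivedSubalg 𝔫, ∀ x : 𝔫, x ∉ derivedSubalg 𝔫 → ∃ y : 𝔫, ⁅x, y⁆ = z

/-- `d` is a metric, given as a two-variable distance function. -/
structure IsMetricFun {X : Type*} (d : X → X → ℝ) : Prop where
  refl : ∀ x, d x x = 0
  eq_of_dist_eq_zero : ∀ x y, d x y = 0 → x = y
  symm : ∀ x y, d x y = d y x
  triangle : ∀ x y z, d x z ≤ d x y + d y z

/-- `f` is a norm on the subspace `W`. -/
structure IsNormOn {𝔫 : Type*} [AddCommGroup 𝔫] [Module ℝ 𝔫]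
    (W : Submodule ℝ 𝔫) (f : 𝔫 → ℝ) : Prop where
  nonneg : ∀ x ∈ W, 0 ≤ f x
  eq_zero : ∀ x ∈ W, f x = 0 → x = 0
  smul : ∀ (c : ℝ), ∀ x ∈ W, f (c • x) = |c| * f x
  add_le : ∀ x ∈ W, ∀ y ∈ W, f (x + y) ≤ f x + f y

open Filter Topology

section FiniteDimensional

variable {𝕜 E F : Type*} [NontriviallyNormedField 𝕜] [CompleteSpace 𝕜]
  [AddCommGroup E] [Module 𝕜 E] [FiniteDimensional 𝕜 E]
  [TopologicalSpace E] [IsTopologicalAddGroup E] [ContinuousSMul 𝕜 E]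

theorem Seminorm.continuous_of_finiteDimensional [T2Space E] (p : Seminorm 𝕜 E) :
    Continuous p := by
  let b := Module.finBasis 𝕜 E
  have hle : ∀ x, p x ≤ ∑ i, ‖b.repr x i‖ * p (b i) := fun x =>
    calc p x = p (∑ i, b.repr x i • b i) := by rw [b.sum_repr]
      _ ≤ ∑ i, p (b.repr x i • b i) :=
        Finset.le_sum_of_subadditive p (map_zero p).le (map_add_le_add p) _ _
      _ = ∑ i, ‖b.repr x i‖ * p (b i) := by simp only [map_smul_eq_mul]
  have hbound : Continuous fun x => ∑ i, ‖b.repr x i‖ * p (b i) :=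
    _root_.continuous_finsetSum _ fun i _ =>
      ((b.coord i).continuous_of_finiteDimensional.norm).mul continuous_const
  refine Seminorm.continuous_of_continuousAt_zero ?_
  rw [ContinuousAt, map_zero]
  refine tendsto_of_tendsto_of_tendsto_of_le_of_le tendsto_const_nhds ?_
    (fun x => apply_nonneg p x) hle
  simpa using hbound.tendsto 0

variable [AddCommGroup F] [Module 𝕜 F] [TopologicalSpace F] [IsTopologicalAddGroup F]
  [ContinuousSMul 𝕜 F] [T2Space F]

theorem LinearMap.image_mem_nhdsWithin_range (f : E →ₗ[𝕜] F) {s : Set E} (hs : s ∈ 𝓝 0) :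
    f '' s ∈ 𝓝[LinearMap.range f] 0 := by
  have hopen : IsOpenMap f.rangeRestrict :=
    f.rangeRestrict.isOpenMap_of_finiteDimensional f.surjective_rangeRestrict
  have := mem_nhds_subtype_iff_nhdsWithin.1 (map_zero f.rangeRestrict ▸ hopen.image_mem_nhds hs)
  rwa [Set.image_image] at this

end FiniteDimensional

theorem sub_apply_mem_of_isCompl {R E : Type*} [Ring R] [AddCommGroup E] [Module R E]
    {V W : Submodule R E} (hVW : IsCompl V W) (π : E →ₗ[R] E) (hπV : ∀ v ∈ V, π v = v)
    (hπW : ∀ w ∈ W, π w = 0) (y : E) : y - π y ∈ W := by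
  obtain ⟨v, hv, w, hw, rfl⟩ := Submodule.mem_sup.1 (hVW.sup_eq_top ▸ Submodule.mem_top (x := y))
  simpa [hπV v hv, hπW w hw] using hw

def IsNormOn.toSeminorm {E : Type*} [AddCommGroup E] [Module ℝ E] {W : Submodule ℝ E}
    {f : E → ℝ} (hf : IsNormOn W f) : Seminorm ℝ W :=
  Seminorm.of (fun v => f v) (fun x y => hf.add_le _ x.2 _ y.2)
    (fun c x => by rw [Real.norm_eq_abs]; exact hf.smul c x x.2)

section TwoStepNilpotent

variable {𝔫 : Type*} [LieRing 𝔫] [LieAlgebra ℝ 𝔫]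

theorem lie_mem_derivedSubalg (x y : 𝔫) : ⁅x, y⁆ ∈ derivedSubalg 𝔫 :=
  Submodule.subset_span ⟨x, y, rfl⟩

theorem lie_eq_zero_of_mem_derivedSubalg (h2 : ∀ x y z : 𝔫, ⁅⁅x, y⁆, z⁆ = 0) (x : 𝔫) {w : 𝔫}
    (hw : w ∈ derivedSubalg 𝔫) : ⁅x, w⁆ = 0 := by
  have : derivedSubalg 𝔫 ≤ LinearMap.ker (LieAlgebra.ad ℝ 𝔫 x) := by
    rw [derivedSubalg, Submodule.span_le]
    rintro _ ⟨a, b, rfl⟩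
    rw [SetLike.mem_coe, LinearMap.mem_ker, LieAlgebra.ad_apply, ← lie_skew, h2, neg_zero]
  exact this hw

theorem lie_apply_eq_of_isCompl (h2 : ∀ x y z : 𝔫, ⁅⁅x, y⁆, z⁆ = 0) {V : Submodule ℝ 𝔫}
    (hV : IsCompl V (derivedSubalg 𝔫)) (π : 𝔫 →ₗ[ℝ] 𝔫) (hπid : ∀ v ∈ V, π v = v)
    (hπker : ∀ z ∈ derivedSubalg 𝔫, π z = 0) (g y : 𝔫) : ⁅g, π y⁆ = ⁅g, y⁆ := by
  have := lie_eq_zero_of_mem_derivedSubalg h2 g (sub_apply_mem_of_isCompl hV π hπid hπker y)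
  rwa [lie_sub, sub_eq_zero, eq_comm] at this

theorem setOf_lie_eq_image_ad_normBall (h2 : ∀ x y z : 𝔫, ⁅⁅x, y⁆, z⁆ = 0) {V : Submodule ℝ 𝔫}
    (hV : IsCompl V (derivedSubalg 𝔫)) (π : 𝔫 →ₗ[ℝ] 𝔫) (hπmem : ∀ x : 𝔫, π x ∈ V)
    (hπid : ∀ v ∈ V, π v = v) (hπker : ∀ z ∈ derivedSubalg 𝔫, π z = 0) {nV : 𝔫 → ℝ}
    {d : 𝔫 → 𝔫 → ℝ} (hdV : ∀ v ∈ V, d 0 v = nV v) (hdπ : ∀ h : 𝔫, nV (π h) ≤ d 0 h)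
    (g : 𝔫) (r : ℝ) :
    {z : 𝔫 | ∃ y : 𝔫, d 0 y ≤ r ∧ ⁅g, y⁆ = z} =
      LieAlgebra.ad ℝ 𝔫 g '' {v | v ∈ V ∧ nV v ≤ r} := by
  ext z
  constructor
  · rintro ⟨y, hy, rfl⟩
    exact ⟨π y, ⟨hπmem y, (hdπ y).trans hy⟩, lie_apply_eq_of_isCompl h2 hV π hπid hπker g y⟩
  · rintro ⟨v, ⟨hv, hvr⟩, rfl⟩
    exact ⟨v, (hdV v hv).trans_le hvr, rfl⟩

variable {V : Submodule ℝ 𝔫} {nV : 𝔫 → ℝ}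

theorem starConvex_image_ad_normBall (hnV : IsNormOn V nV) (g : 𝔫) (r : ℝ) :
    StarConvex ℝ 0 (LieAlgebra.ad ℝ 𝔫 g '' {v | v ∈ V ∧ nV v ≤ r}) := by
  have hball : StarConvex ℝ 0 {v | v ∈ V ∧ nV v ≤ r} := by
    rintro v ⟨hv, hvr⟩ a b ha hb hab
    rw [smul_zero, zero_add]
    refine ⟨V.smul_mem b hv, ?_⟩
    rw [hnV.smul b v hv, abs_of_nonneg hb]
    nlinarith [hnV.nonneg v hv]
  simpa only [map_zero] using hball.linear_image (LieAlgebra.ad ℝ 𝔫 g)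

theorem image_ad_normBall_mem_nhdsWithin [FiniteDimensional ℝ 𝔫] [TopologicalSpace 𝔫]
    [IsTopologicalAddGroup 𝔫] [ContinuousSMul ℝ 𝔫] [T2Space 𝔫] (hnV : IsNormOn V nV) {g : 𝔫}
    (hsurj : ∀ z ∈ derivedSubalg 𝔫, ∃ v ∈ V, ⁅g, v⁆ = z) {r : ℝ} (hr : 0 < r) :
    LieAlgebra.ad ℝ 𝔫 g '' {v | v ∈ V ∧ nV v ≤ r} ∈ 𝓝[derivedSubalg 𝔫] 0 := by
  let T := (LieAlgebra.ad ℝ 𝔫 g).comp V.subtype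
  have hT : LinearMap.range T = derivedSubalg 𝔫 := by
    refine le_antisymm ?_ fun z hz => ?_
    · rintro _ ⟨v, rfl⟩
      exact lie_mem_derivedSubalg g v
    · obtain ⟨v, hv, rfl⟩ := hsurj z hz
      exact ⟨⟨v, hv⟩, rfl⟩
  let p := hnV.toSeminorm
  have hball : {v : V | nV v ≤ r} ∈ 𝓝 0 :=
    mem_of_superset (p.ball_mem_nhds p.continuous_of_finiteDimensional hr)
      fun v hv => (p.mem_ball_zero.1 hv).le
  refine mem_of_superset (hT ▸ T.image_mem_nhdsWithin_range hball) ?_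
  rintro _ ⟨v, hv, rfl⟩
  exact ⟨v, ⟨v.2, hv⟩, rfl⟩

end TwoStepNilpotent

theorem commutator_set_compact_starConvex_nbhd_general {𝔫 : Type*} [LieRing 𝔫] [LieAlgebra ℝ 𝔫]
    [FiniteDimensional ℝ 𝔫] [TopologicalSpace 𝔫] [IsTopologicalAddGroup 𝔫]
    [ContinuousSMul ℝ 𝔫] [T2Space 𝔫]
    (h2 : ∀ x y z : 𝔫, ⁅⁅x, y⁆, z⁆ = 0)
    (V : Submodule ℝ 𝔫) (hV : IsCompl V (derivedSubalg 𝔫))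
    (π : 𝔫 →ₗ[ℝ] 𝔫) (hπmem : ∀ x : 𝔫, π x ∈ V) (hπid : ∀ v ∈ V, π v = v)
    (hπker : ∀ z ∈ derivedSubalg 𝔫, π z = 0)
    (nV : 𝔫 → ℝ) (hnV : IsNormOn V nV)
    (dInfty : 𝔫 → 𝔫 → ℝ)
    (hballs : ∀ (c : 𝔫) (R : ℝ), IsCompact {x : 𝔫 | dInfty c x ≤ R})
    (hdV : ∀ v ∈ V, dInfty 0 v = nV v)
    (hdπ : ∀ h : 𝔫, nV (π h) ≤ dInfty 0 h) :
    ∀ (g : 𝔫) (r : ℝ), 0 < r →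
      ({z : 𝔫 | ∃ y : 𝔫, dInfty 0 y ≤ r ∧ ⁅g, y⁆ = z} ⊆ (derivedSubalg 𝔫 : Set 𝔫)) ∧
      IsCompact {z : 𝔫 | ∃ y : 𝔫, dInfty 0 y ≤ r ∧ ⁅g, y⁆ = z} ∧
      (∀ z ∈ {z : 𝔫 | ∃ y : 𝔫, dInfty 0 y ≤ r ∧ ⁅g, y⁆ = z}, ∀ s ∈ Set.Icc (0 : ℝ) 1,
        s • z ∈ {z : 𝔫 | ∃ y : 𝔫, dInfty 0 y ≤ r ∧ ⁅g, y⁆ = z}) ∧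
      (Nonsingular 𝔫 → g ∉ derivedSubalg 𝔫 →
        {z : 𝔫 | ∃ y : 𝔫, dInfty 0 y ≤ r ∧ ⁅g, y⁆ = z} ∈
          nhdsWithin (0 : 𝔫) (derivedSubalg 𝔫 : Set 𝔫)) := by
  intro g r hr
  have hC : {z : 𝔫 | ∃ y : 𝔫, dInfty 0 y ≤ r ∧ ⁅g, y⁆ = z} =
      LieAlgebra.ad ℝ 𝔫 g '' {v | v ∈ V ∧ nV v ≤ r} :=
    setOf_lie_eq_image_ad_normBall h2 hV π hπmem hπid hπker hdV hdπ g r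
  refine ⟨?_, (hballs 0 r).image (LieAlgebra.ad ℝ 𝔫 g).continuous_of_finiteDimensional, ?_,
    fun hns hg => ?_⟩
  · rintro _ ⟨y, -, rfl⟩
    exact lie_mem_derivedSubalg g y
  · rw [hC]
    exact fun z hz s hs => (starConvex_image_ad_normBall hnV g r).smul_mem hz hs.1 hs.2
  · have hsurj : ∀ z ∈ derivedSubalg 𝔫, ∃ v ∈ V, ⁅g, v⁆ = z := fun z hz => by
      obtain ⟨y, rfl⟩ := hns z hz g hg
      exact ⟨π y, hπmem y, lie_apply_eq_of_isCompl h2 hV π hπid hπker g y⟩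
    rw [hC]
    exact image_ad_normBall_mem_nhdsWithin hnV hsurj hr

/-- Sublemma 4.2 of the paper: for `g ∈ 𝔫` and `r > 0`, the set
`C(g, r) = {⁅g, y⁆ : dInfty(0, y) ≤ r}` is a compact star-convex (about `0`) subset of
`⁅𝔫, 𝔫⁆`; if moreover `𝔫` is non-singular and `g ∉ ⁅𝔫, 𝔫⁆`, then `C(g, r)` is a
neighborhood of `0` in `⁅𝔫, 𝔫⁆` (i.e. for the subspace topology on `⁅𝔫, 𝔫⁆`).
The topology on `𝔫` is the (unique) Hausdorff vector topology of the finite-dimensional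
real vector space `𝔫`, i.e. the norm topology. -/
theorem commutator_set_compact_starConvex_nbhd {𝔫 : Type*} [LieRing 𝔫] [LieAlgebra ℝ 𝔫]
    [FiniteDimensional ℝ 𝔫] [TopologicalSpace 𝔫] [IsTopologicalAddGroup 𝔫]
    [ContinuousSMul ℝ 𝔫] [T2Space 𝔫]
    (h2 : ∀ x y z : 𝔫, ⁅⁅x, y⁆, z⁆ = 0)
    (V : Submodule ℝ 𝔫) (hV : IsCompl V (derivedSubalg 𝔫))
    (π : 𝔫 →ₗ[ℝ] 𝔫) (hπmem : ∀ x : 𝔫, π x ∈ V) (hπid : ∀ v ∈ V, π v = v)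
    (hπker : ∀ z ∈ derivedSubalg 𝔫, π z = 0)
    (nV : 𝔫 → ℝ) (hnV : IsNormOn V nV)
    (dInfty : 𝔫 → 𝔫 → ℝ) (hdInfty : IsMetricFun dInfty)
    (hballs : ∀ (c : 𝔫) (R : ℝ), IsCompact {x : 𝔫 | dInfty c x ≤ R})
    (hdV : ∀ v ∈ V, dInfty 0 v = nV v)
    (hdπ : ∀ h : 𝔫, nV (π h) ≤ dInfty 0 h) :
    ∀ (g : 𝔫) (r : ℝ), 0 < r →
      ({z : 𝔫 | ∃ y : 𝔫, dInfty 0 y ≤ r ∧ ⁅g, y⁆ = z} ⊆ (derivedSubalg 𝔫 : Set 𝔫)) ∧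
      IsCompact {z : 𝔫 | ∃ y : 𝔫, dInfty 0 y ≤ r ∧ ⁅g, y⁆ = z} ∧
      (∀ z ∈ {z : 𝔫 | ∃ y : 𝔫, dInfty 0 y ≤ r ∧ ⁅g, y⁆ = z}, ∀ s ∈ Set.Icc (0 : ℝ) 1,
        s • z ∈ {z : 𝔫 | ∃ y : 𝔫, dInfty 0 y ≤ r ∧ ⁅g, y⁆ = z}) ∧
      (Nonsingular 𝔫 → g ∉ derivedSubalg 𝔫 →
        {z : 𝔫 | ∃ y : 𝔫, dInfty 0 y ≤ r ∧ ⁅g, y⁆ = z} ∈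
          nhdsWithin (0 : 𝔫) (derivedSubalg 𝔫 : Set 𝔫)) :=
  commutator_set_compact_starConvex_nbhd_general h2 V hV π hπmem hπid hπker nV hnV dInfty hballs hdV
    hdπ
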